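/- arXiv:2012.09437 — 2 statements merged into one kernel-verified Lean document; each statement's English description precedes it below -/
import Mathlib

section
/- Under Assumptions 1–5, for every z ∈ 𝒰̄ \ {z̲₁, …, z̲_K}, the matrix 𝕄(z) has no eigenvalue on 𝕊¹, exactly r eigenvalues (counted with algebraic multiplicity) in 𝔻 \ {0}, and exactly p eigenvalues in 𝒰. -/
open scoped Classical
open Complex Filter Asymptotics Metric

noncomputable section

set_option autoImplicit false

/-- the space `ℓ²(ℤ;ℂ)` -/
abbrev Seq2 : Type := lp (fun _ : ℤ => ℂ) 2

/-- the action of the convolution operator with coefficients `a` supported in `{-r, …, p}`: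
`(Q u)_j = ∑_{ℓ=-r}^p a_ℓ u_{j+ℓ}`. -/
def convAct (r p : ℕ) (a : ℤ → ℂ) (u : ℤ → ℂ) (j : ℤ) : ℂ :=
  ∑ ℓ ∈ Finset.Icc (-(r : ℤ)) (p : ℤ), a ℓ * u (j + ℓ)

/-- the symbol `Q̂(κ) = ∑_{ℓ=-r}^p a_ℓ κ^ℓ`. -/
def symbol (r p : ℕ) (a : ℤ → ℂ) (κ : ℂ) : ℂ :=
  ∑ ℓ ∈ Finset.Icc (-(r : ℤ)) (p : ℤ), a ℓ * κ ^ ℓ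

/-- the symbol `F = Q̂₀ / Q̂₁` of the operator `ℒ = Q₁⁻¹ Q₀`. -/
def Fsym (r p : ℕ) (a0 a1 : ℤ → ℂ) (κ : ℂ) : ℂ :=
  symbol r p a0 κ / symbol r p a1 κ

/-- `𝔸_ℓ(z) = z a_{ℓ,1} - a_{ℓ,0}`. -/
def Acoef (a0 a1 : ℤ → ℂ) (ℓ : ℤ) (z : ℂ) : ℂ := z * a1 ℓ - a0 ℓ

/-- the companion-type matrix `𝕄(z) ∈ M_{p+r}(ℂ)`: first row
`(-𝔸_{p-1}(z)/𝔸_p(z), …, -𝔸_{-r}(z)/𝔸_p(z))`, ones on the subdiagonal, zeros elsewhere. -/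
def Mmat (r p : ℕ) (a0 a1 : ℤ → ℂ) (z : ℂ) : Matrix (Fin (p + r)) (Fin (p + r)) ℂ :=
  fun i j =>
    if (i : ℕ) = 0 then - Acoef a0 a1 ((p : ℤ) - 1 - (j : ℕ)) z / Acoef a0 a1 (p : ℤ) z
    else if (i : ℕ) = (j : ℕ) + 1 then 1 else 0

/-- the discrete Dirac mass `δ ∈ ℓ²(ℤ;ℂ)`. -/
def dirac : Seq2 := lp.single 2 (0 : ℤ) (1 : ℂ)

/-- The full set of data and assumptions (Assumptions 1–5) of the paper. -/
structure Setup where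
  r : ℕ
  p : ℕ
  hrp : 1 ≤ p + r
  a0 : ℤ → ℂ
  a1 : ℤ → ℂ
  K : ℕ
  hK : 1 ≤ K
  /-- the tangency points `κ̲₁, …, κ̲_K` on the unit circle -/
  kap : Fin K → ℂ
  /-- the drifts `α_k` -/
  α : Fin K → ℝ
  /-- the diffusion coefficients `β_k` -/
  β : Fin K → ℝ
  /-- the integers `μ_k` (the order of tangency is `2 μ_k`) -/
  μ : Fin K → ℕ
  /-- the operator `ℒ = Q₁⁻¹ Q₀` acting on `ℓ²(ℤ;ℂ)` -/
  L : Seq2 →L[ℂ] Seq2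
  /-- Assumption 1: the symbol of `Q₁` does not vanish on the unit circle -/
  hQ1_ne : ∀ κ : ℂ, ‖κ‖ = 1 → symbol r p a1 κ ≠ 0
  /-- Assumption 1: the index condition -/
  hQ1_index :
    (2 * (Real.pi : ℂ) * Complex.I)⁻¹ *
      (∮ κ in C(0, 1), deriv (symbol r p a1) κ / symbol r p a1 κ) = 0
  /-- `ℒ` is characterized by `Q₁ ∘ ℒ = Q₀` -/
  hL : ∀ (u : Seq2) (j : ℤ),
    convAct r p a1 (fun i => L u i) j = convAct r p a0 (fun i => u i) j
  /-- Assumption 2: the `κ̲_k` are distinct points of the unit circle -/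
  hkap_unit : ∀ k, ‖kap k‖ = 1
  hkap_inj : Function.Injective kap
  /-- Assumption 2: `|F| < 1` away from the `κ̲_k` -/
  hF_lt : ∀ κ : ℂ, ‖κ‖ = 1 → (∀ k, κ ≠ kap k) → ‖Fsym r p a0 a1 κ‖ < 1
  /-- Assumption 2: `F(κ̲_k) ∈ 𝕊¹` -/
  hF_unit : ∀ k, ‖Fsym r p a0 a1 (kap k)‖ = 1
  hα : ∀ k, α k ≠ 0
  hβ : ∀ k, 0 < β k
  hμ : ∀ k, 1 ≤ μ k
  /-- Assumption 2: local expansion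
  `F(κ̲_k e^{iξ})/F(κ̲_k) = exp(-i α_k ξ - β_k ξ^{2μ_k} + O(ξ^{2μ_k+1}))` as `ξ → 0` -/
  hexp : ∀ k, ∃ g : ℝ → ℂ,
    (g =O[nhds 0] fun ξ : ℝ => ξ ^ (2 * μ k + 1)) ∧
    ∀ᶠ ξ : ℝ in nhds 0,
      Fsym r p a0 a1 (kap k * Complex.exp (Complex.I * ξ)) / Fsym r p a0 a1 (kap k)
        = Complex.exp (-(Complex.I) * (α k : ℂ) * (ξ : ℂ)
            - (β k : ℂ) * (ξ : ℂ) ^ (2 * μ k) + g ξ)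
  /-- Assumption 3: `𝔸_{-r}` and `𝔸_p` do not vanish on `𝒰̄` -/
  hA : ∀ z : ℂ, 1 ≤ ‖z‖ → Acoef a0 a1 (-(r : ℤ)) z ≠ 0 ∧ Acoef a0 a1 (p : ℤ) z ≠ 0
  /-- Assumption 4: either `Q₁` is the identity, or `a_{-r,1} ≠ 0` and `a_{p,1} ≠ 0` -/
  hQ1' : (∀ ℓ ∈ Finset.Icc (-(r : ℤ)) (p : ℤ), a1 ℓ = if ℓ = 0 then 1 else 0) ∨
    (a1 (-(r : ℤ)) ≠ 0 ∧ a1 (p : ℤ) ≠ 0)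
  /-- Assumption 5: each `ℐ_k` has one or two elements -/
  h5card : ∀ k : Fin K,
    (Finset.univ.filter fun ν =>
      Fsym r p a0 a1 (kap ν) = Fsym r p a0 a1 (kap k)).card ≤ 2
  /-- Assumption 5: when `ℐ_k` has two elements, the corresponding drifts have opposite signs -/
  h5sign : ∀ k ν₁ ν₂ : Fin K,
    Fsym r p a0 a1 (kap ν₁) = Fsym r p a0 a1 (kap k) →
    Fsym r p a0 a1 (kap ν₂) = Fsym r p a0 a1 (kap k) →
    ν₁ ≠ ν₂ → α ν₁ * α ν₂ < 0

/-- the symbol `F` of `ℒ` -/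
def Setup.F (S : Setup) : ℂ → ℂ := Fsym S.r S.p S.a0 S.a1

/-- the tangency points `z̲_k = F(κ̲_k)` of the spectrum of `ℒ` with the unit circle -/
def Setup.zK (S : Setup) (k : Fin S.K) : ℂ := S.F (S.kap k)

/-- the matrix `𝕄(z)` -/
def Setup.M (S : Setup) (z : ℂ) : Matrix (Fin (S.p + S.r)) (Fin (S.p + S.r)) ℂ :=
  Mmat S.r S.p S.a0 S.a1 z

/-!
Up to the factor `𝔸_p(z)`, the characteristic polynomial of the companion matrix `𝕄(z)` is
`P_z(κ) = κ ^ r (z Q̂₁(κ) - Q̂₀(κ))`, a polynomial of degree `p + r` with `P_z(0) = 𝔸_{-r}(z) ≠ 0`.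
A root `κ ∈ 𝕊¹` would force `z = F(κ)`, which Assumption 2 excludes unless `z` is some `z̲_k`.

With `s = 1 / z`, the roots of `P_z` are those of the pencil `κ ^ r (Q̂₁(κ) - s Q̂₀(κ))`, and `s`
ranges over the closed unit disc minus the points `1 / z̲_k`: a connected set containing `s = 0`
on which no pencil polynomial vanishes on `𝕊¹`. By the argument principle the number of roots in
`𝔻` is locally constant there, so it equals its value at `s = 0`, which is `r` by the index
condition on `Q̂₁`. The remaining `p` roots lie in `𝒰`.
-/

open Polynomial Metric Topology

section ArgumentPrinciple

variable {c : ℂ} {R : ℝ}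

theorem circleIntegral_sub_inv_of_notMem_sphere (hR : 0 < R) {w : ℂ} (hw : w ∉ sphere c R) :
    (∮ z in C(c, R), (z - w)⁻¹) = if w ∈ ball c R then 2 * Real.pi * Complex.I else 0 := by
  split_ifs with hwb
  · exact circleIntegral.integral_sub_inv_of_mem_ball hwb
  · have hwc : w ∉ closedBall c R := fun h =>
      hwb (by rw [← closedBall_sdiff_sphere]; exact ⟨h, hw⟩)
    refine DiffContOnCl.circleIntegral_eq_zero hR.le (DifferentiableOn.diffContOnCl ?_)
    rw [closure_ball c hR.ne']
    exact fun z hz => ((differentiableAt_id.sub_const w).inv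
      (sub_ne_zero.2 (ne_of_mem_of_not_mem hz hwc))).differentiableWithinAt

theorem circleIntegral_multiset_sum_inv_sub (hR : 0 < R) (m : Multiset ℂ)
    (hm : ∀ w ∈ m, w ∉ sphere c R) :
    (∮ z in C(c, R), (m.map fun w => 1 / (z - w)).sum)
      = 2 * Real.pi * Complex.I * (m.filter (· ∈ ball c R)).card := by
  have hcont : ∀ w ∉ sphere c R, ContinuousOn (fun z => 1 / (z - w)) (sphere c R) :=
    fun w hw => continuousOn_const.div (continuousOn_id.sub continuousOn_const)
      fun z hz => sub_ne_zero.2 (ne_of_mem_of_not_mem hz hw)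
  induction m using Multiset.induction_on with
  | empty => simp [circleIntegral]
  | cons a m ih =>
    have ha := hm a (Multiset.mem_cons_self a m)
    have hm' : ∀ w ∈ m, w ∉ sphere c R := fun w hw => hm w (Multiset.mem_cons_of_mem hw)
    simp only [Multiset.map_cons, Multiset.sum_cons]
    rw [circleIntegral.integral_add ((hcont a ha).circleIntegrable hR.le)
      ((continuousOn_multiset_sum m fun w hw => hcont w (hm' w hw)).circleIntegrable hR.le),
      ih hm', Multiset.filter_cons]
    simp only [one_div, circleIntegral_sub_inv_of_notMem_sphere hR ha]
    split_ifs <;> simp only [Multiset.card_add, Multiset.card_singleton, Multiset.card_zero]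
      <;> push_cast <;> ring

theorem circleIntegral_eval_derivative_div_eval (hR : 0 < R) (q : ℂ[X])
    (hq : ∀ z ∈ sphere c R, q.eval z ≠ 0) :
    (∮ z in C(c, R), q.derivative.eval z / q.eval z)
      = 2 * Real.pi * Complex.I * (q.roots.filter (· ∈ ball c R)).card := by
  have hq0 : q ≠ 0 := by
    rintro rfl
    exact hq (c + R) (by simp [abs_of_pos hR]) eval_zero
  rw [circleIntegral.integral_congr hR.le fun z hz =>
    (IsAlgClosed.splits q).eval_derivative_div_eval_of_ne_zero (hq z hz)]
  exact circleIntegral_multiset_sum_inv_sub hR _ fun w hw hws =>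
    hq w hws ((mem_roots hq0).1 hw)

end ArgumentPrinciple

theorem continuous_eval_of_continuous_coeff {X R : Type*} [TopologicalSpace X] [Semiring R]
    [TopologicalSpace R] [IsTopologicalSemiring R] {f : X → R[X]} {n : ℕ}
    (hdeg : ∀ x, (f x).natDegree ≤ n) (hcoeff : ∀ i, Continuous fun x => (f x).coeff i) :
    Continuous fun p : X × R => (f p.1).eval p.2 := by
  simp_rw [eval_eq_sum_range' (Nat.lt_succ_of_le (hdeg _))]
  exact continuous_finsetSum _ fun i _ =>
    ((hcoeff i).comp continuous_fst).mul (continuous_snd.pow i)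

theorem continuousAt_card_roots_filter_mem_ball {X : Type*} [TopologicalSpace X]
    {f : X → ℂ[X]} {n : ℕ} (hdeg : ∀ x, (f x).natDegree ≤ n)
    (hcoeff : ∀ i, Continuous fun x => (f x).coeff i) {c : ℂ} {R : ℝ} (hR : 0 < R) {x₀ : X}
    (h₀ : ∀ z ∈ sphere c R, (f x₀).eval z ≠ 0) :
    ContinuousAt (fun x => ((f x).roots.filter (· ∈ ball c R)).card) x₀ := by
  have hE := continuous_eval_of_continuous_coeff hdeg hcoeff
  have hD : Continuous fun p : X × ℂ => (f p.1).derivative.eval p.2 :=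
    continuous_eval_of_continuous_coeff
      (fun x => (natDegree_derivative_le _).trans ((Nat.sub_le _ 1).trans (hdeg x)))
      fun i => by simp only [coeff_derivative]; fun_prop
  obtain ⟨u, v, hu, -, hx₀u, hv, huv⟩ := generalized_tube_lemma isCompact_singleton
    (isCompact_sphere c R) (isOpen_compl_singleton.preimage hE)
    (by rintro ⟨x, z⟩ ⟨rfl, hz⟩; exact h₀ z hz)
  have hne : ∀ x ∈ u, ∀ z ∈ sphere c R, (f x).eval z ≠ 0 :=
    fun x hx z hz => huv (Set.mk_mem_prod hx (hv hz))
  have hcount : ∀ y : u, ((((f y).roots.filter (· ∈ ball c R)).card : ℝ) : ℂ)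
      = (2 * Real.pi * Complex.I)⁻¹ * ∮ z in C(c, R), (f y).derivative.eval z / (f y).eval z := by
    intro y
    rw [circleIntegral_eval_derivative_div_eval hR _ (hne y y.2),
      inv_mul_cancel_left₀ Complex.two_pi_I_ne_zero, Complex.ofReal_natCast]
  refine ContinuousOn.continuousAt ?_ (hu.mem_nhds (hx₀u rfl))
  rw [continuousOn_iff_continuous_domRestrict,
    ((Complex.isometry_ofReal.isEmbedding.comp
      Nat.isClosedEmbedding_coe_real.isEmbedding).isInducing).continuous_iff]
  simp only [Function.comp_def, Set.domRestrict_apply, hcount, circleIntegral, deriv_circleMap]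
  refine continuous_const.mul
    (intervalIntegral.continuous_parametric_intervalIntegral_of_continuous' ?_ _ _)
  have hm : Continuous fun q : u × ℝ => ((q.1 : X), circleMap c R q.2) := by fun_prop
  exact (((continuous_circleMap 0 R).comp continuous_snd).mul continuous_const).smul
    ((hD.comp hm).div (hE.comp hm) fun q => hne _ q.1.2 _ (circleMap_mem_sphere c hR.le q.2))

theorem card_filter_norm_lt_one_add_card_filter_one_lt_norm (m : Multiset ℂ)
    (hm : ∀ κ ∈ m, ‖κ‖ ≠ 1) :
    (m.filter (‖·‖ < 1)).card + (m.filter (1 < ‖·‖)).card = Multiset.card m := by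
  conv_rhs => rw [← Multiset.filter_add_not (‖·‖ < 1) m, Multiset.card_add]
  congr 2
  exact Multiset.filter_congr fun κ hκ =>
    ⟨fun h => not_lt.2 h.le, fun h => (hm κ hκ).symm.lt_of_le (not_lt.1 h)⟩

namespace Matrix

variable {R : Type*} [CommRing R]

def bidiagonalWithFirstRow {n : ℕ} (x : R) (d : Fin n → R) : Matrix (Fin n) (Fin n) R :=
  of fun i j => if (i : ℕ) = 0 then d j else if i = j then x else if (i : ℕ) = j + 1 then -1 else 0

/-- Expansion along the first column: the minor of the `(0, 0)` entry is lower triangular, and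
that of the `(1, 0)` entry is again of this shape. -/
theorem det_bidiagonalWithFirstRow (x : R) :
    ∀ {n : ℕ} (d : Fin (n + 1) → R),
      (bidiagonalWithFirstRow x d).det = ∑ j : Fin (n + 1), d j * x ^ (n - j)
  | 0, d => by simp [bidiagonalWithFirstRow]
  | n + 1, d => by
    have hminor₀ : ((bidiagonalWithFirstRow x d).submatrix (Fin.succAbove 0) Fin.succ).det
        = x ^ (n + 1) := by
      rw [det_of_isLowerTriangular]
      · simp [bidiagonalWithFirstRow]
      · intro i j (hij : i < j)
        have : (i : ℕ) ≠ j + 1 := by omega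
        simp [bidiagonalWithFirstRow, hij.ne, this]
    have hminor₁ : (bidiagonalWithFirstRow x d).submatrix (Fin.succ 0).succAbove Fin.succ
        = bidiagonalWithFirstRow x (d ∘ Fin.succ) := by
      ext i j
      cases i using Fin.cases <;> simp [bidiagonalWithFirstRow, Fin.succAbove, Fin.lt_def]
    rw [det_succ_column_zero, Fin.sum_univ_succ, Fin.sum_univ_succ, Finset.sum_eq_zero,
      hminor₀, hminor₁, det_bidiagonalWithFirstRow x, Fin.sum_univ_succ (n := n + 1)]
    · simp [bidiagonalWithFirstRow]
    · intro i _
      simp [bidiagonalWithFirstRow]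

def companion {n : ℕ} (c : Fin n → R) : Matrix (Fin n) (Fin n) R :=
  of fun i j => if (i : ℕ) = 0 then c j else if (i : ℕ) = j + 1 then 1 else 0

theorem charpoly_companion : ∀ {n : ℕ} (c : Fin n → R),
    (companion c).charpoly = X ^ n - ∑ j : Fin n, C (c j) * X ^ (n - 1 - j)
  | 0, c => by simp
  | n + 1, c => by
    have hcharmatrix : charmatrix (companion c)
        = bidiagonalWithFirstRow X fun j => (if j = 0 then X else 0) - C (c j) := by
      refine Matrix.ext fun i j => ?_
      simp only [charmatrix_apply, companion, bidiagonalWithFirstRow, of_apply, diagonal_apply]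
      split_ifs <;> subst_vars <;> first | omega | simp_all [Fin.val_eq_zero_iff]
    rw [charpoly, hcharmatrix, det_bidiagonalWithFirstRow, Fin.sum_univ_succ,
      Fin.sum_univ_succ (n := n)]
    simp only [↓reduceIte, Fin.coe_ofNat_eq_mod, Nat.zero_mod, tsub_zero, Fin.succ_ne_zero,
      zero_sub, Fin.val_succ, neg_mul, Finset.sum_neg_distrib, add_tsub_cancel_right]
    ring

end Matrix

def symbolPoly (r p : ℕ) (a : ℤ → ℂ) : ℂ[X] :=
  ∑ i ∈ Finset.range (p + r + 1), C (a (i - r)) * X ^ i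

section SymbolPoly

variable (r p : ℕ) (a : ℤ → ℂ)

theorem coeff_symbolPoly (k : ℕ) :
    (symbolPoly r p a).coeff k = if k ≤ p + r then a (k - r) else 0 := by
  simp [symbolPoly]

theorem coeff_zero_symbolPoly : (symbolPoly r p a).coeff 0 = a (-r) := by
  simp [coeff_symbolPoly]

theorem natDegree_symbolPoly_le : (symbolPoly r p a).natDegree ≤ p + r :=
  natDegree_le_iff_coeff_eq_zero.2 fun k hk => by
    rw [coeff_symbolPoly, if_neg (by exact_mod_cast hk.not_ge)]

theorem natDegree_symbolPoly (ha : a p ≠ 0) : (symbolPoly r p a).natDegree = p + r :=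
  natDegree_eq_of_le_of_coeff_ne_zero (natDegree_symbolPoly_le r p a)
    (by simpa [coeff_symbolPoly])

theorem eval_symbolPoly {κ : ℂ} (hκ : κ ≠ 0) :
    (symbolPoly r p a).eval κ = κ ^ r * symbol r p a κ := by
  rw [symbolPoly, eval_finsetSum, symbol, Finset.mul_sum]
  refine Finset.sum_nbij' (fun i => (i : ℤ) - r) (fun ℓ => (ℓ + r).toNat) ?_ ?_ ?_ ?_ ?_
    <;> intro i hi <;> simp only [Finset.mem_range, Finset.mem_Icc] at hi ⊢
  · omega
  · omega
  · omega
  · omega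
  · rw [eval_mul, eval_C, eval_pow, eval_X, mul_left_comm, ← zpow_natCast, ← zpow_natCast,
      ← zpow_add₀ hκ, add_sub_cancel]

theorem symbol_sub_const_mul (b : ℤ → ℂ) (s κ : ℂ) :
    symbol r p (fun ℓ => a ℓ - s * b ℓ) κ = symbol r p a κ - s * symbol r p b κ := by
  simp only [symbol, sub_mul, Finset.sum_sub_distrib, Finset.mul_sum, mul_assoc]

theorem differentiableAt_symbol {κ : ℂ} (hκ : κ ≠ 0) : DifferentiableAt ℂ (symbol r p a) κ := by
  unfold symbol
  fun_prop (disch := simp [hκ])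

theorem deriv_symbol_div_symbol {κ : ℂ} (hκ : κ ≠ 0) (ha : symbol r p a κ ≠ 0) :
    deriv (symbol r p a) κ / symbol r p a κ
      = (symbolPoly r p a).derivative.eval κ / (symbolPoly r p a).eval κ - r * κ⁻¹ := by
  have heq : (fun x => (symbolPoly r p a).eval x) =ᶠ[𝓝 κ] fun x => x ^ r * symbol r p a x :=
    (eventually_ne_nhds hκ).mono fun x hx => eval_symbolPoly r p a hx
  have hmul := logDeriv_mul (f := (· ^ r)) κ (pow_ne_zero r hκ) ha (differentiableAt_pow r)
    (differentiableAt_symbol r p a hκ)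
  rw [logDeriv_pow, logDeriv_apply, logDeriv_apply] at hmul
  rw [← Polynomial.deriv, heq.deriv_eq, heq.eq_of_nhds, hmul, ← div_eq_mul_inv,
    add_sub_cancel_left]

theorem card_roots_symbolPoly_filter_mem_ball (hne : ∀ κ : ℂ, ‖κ‖ = 1 → symbol r p a κ ≠ 0)
    (hidx : (2 * (Real.pi : ℂ) * Complex.I)⁻¹ *
      (∮ κ in C(0, 1), deriv (symbol r p a) κ / symbol r p a κ) = 0) :
    ((symbolPoly r p a).roots.filter (· ∈ ball 0 1)).card = r := by
  set q := symbolPoly r p a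
  have hκ0 : ∀ κ ∈ sphere (0 : ℂ) 1, κ ≠ 0 := fun κ hκ => ne_of_mem_of_not_mem hκ (by simp)
  have hq : ∀ κ ∈ sphere (0 : ℂ) 1, q.eval κ ≠ 0 := fun κ hκ =>
    (eval_symbolPoly r p a (hκ0 κ hκ)).trans_ne
      (mul_ne_zero (pow_ne_zero r (hκ0 κ hκ)) (hne κ (mem_sphere_zero_iff_norm.1 hκ)))
  have hlog : Set.EqOn (fun κ => deriv (symbol r p a) κ / symbol r p a κ)
      (fun κ => q.derivative.eval κ / q.eval κ - r * (κ - 0)⁻¹) (sphere 0 1) := fun κ hκ => by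
    simp only [sub_zero]
    exact deriv_symbol_div_symbol r p a (hκ0 κ hκ) (hne κ (mem_sphere_zero_iff_norm.1 hκ))
  have hq_int : CircleIntegrable (fun κ => q.derivative.eval κ / q.eval κ) 0 1 :=
    (q.derivative.continuous.continuousOn.div q.continuous.continuousOn hq).circleIntegrable
      zero_le_one
  have hinv_int : CircleIntegrable (fun κ => (r : ℂ) * (κ - 0)⁻¹) 0 1 :=
    (continuousOn_const.mul ((continuousOn_id.sub continuousOn_const).inv₀ fun κ hκ =>
      sub_ne_zero.2 (hκ0 κ hκ))).circleIntegrable zero_le_one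
  rw [circleIntegral.integral_congr zero_le_one hlog, circleIntegral.integral_sub hq_int hinv_int,
    circleIntegral_eval_derivative_div_eval one_pos q hq, circleIntegral.integral_const_mul,
    circleIntegral.integral_sub_center_inv 0 one_ne_zero, mul_comm (r : ℂ), ← mul_sub,
    inv_mul_cancel_left₀ Complex.two_pi_I_ne_zero, sub_eq_zero] at hidx
  exact_mod_cast hidx

end SymbolPoly

theorem Mmat_eq_companion (r p : ℕ) (a0 a1 : ℤ → ℂ) (z : ℂ) :
    Mmat r p a0 a1 z = Matrix.companion fun j => -Acoef a0 a1 (p - 1 - j) z / Acoef a0 a1 p z :=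
  rfl

theorem charpoly_Mmat (r p : ℕ) (a0 a1 : ℤ → ℂ) {z : ℂ} (hAp : Acoef a0 a1 p z ≠ 0) :
    (Mmat r p a0 a1 z).charpoly
      = C (Acoef a0 a1 p z)⁻¹ * symbolPoly r p fun ℓ => Acoef a0 a1 ℓ z := by
  rw [Mmat_eq_companion, Matrix.charpoly_companion, symbolPoly, Finset.sum_range_succ,
    Fin.sum_univ_eq_sum_range (fun j => C (-Acoef a0 a1 (p - 1 - j) z / Acoef a0 a1 p z)
      * X ^ (p + r - 1 - j)), ← Finset.sum_range_reflect]
  have hterm : ∀ j ∈ Finset.range (p + r),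
      C (-Acoef a0 a1 (p - 1 - ((p + r - 1 - j : ℕ) : ℤ)) z / Acoef a0 a1 p z)
        * X ^ (p + r - 1 - (p + r - 1 - j))
      = -(C (Acoef a0 a1 p z)⁻¹ * (C (Acoef a0 a1 (j - r) z) * X ^ j)) := by
    intro j hj
    rw [Finset.mem_range] at hj
    have hidx : (p : ℤ) - 1 - ((p + r - 1 - j : ℕ) : ℤ) = j - r := by omega
    rw [hidx, Nat.sub_sub_self (by omega), neg_div, div_eq_inv_mul, C_neg, C_mul]
    ring
  have hlead : ((p + r : ℕ) : ℤ) - r = p := by omega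
  rw [Finset.sum_congr rfl hterm, Finset.sum_neg_distrib, ← Finset.mul_sum, hlead, mul_add,
    ← mul_assoc, ← C_mul, inv_mul_cancel₀ hAp, C_1]
  ring

namespace Setup

variable (S : Setup)

def pencil (s : ℂ) : ℂ[X] := symbolPoly S.r S.p fun ℓ => S.a1 ℓ - s * S.a0 ℓ

theorem symbolPoly_Acoef_eq {z : ℂ} (hz : z ≠ 0) :
    symbolPoly S.r S.p (fun ℓ => Acoef S.a0 S.a1 ℓ z) = C z * S.pencil z⁻¹ := by
  ext k
  simp only [pencil, coeff_C_mul, coeff_symbolPoly]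
  split_ifs
  · rw [Acoef, mul_sub, mul_inv_cancel_left₀ hz]
  · rw [mul_zero]

theorem eval_pencil_ne_zero {s : ℂ} (hs : ‖s‖ ≤ 1) (hsk : ∀ k, s * S.zK k ≠ 1) {κ : ℂ}
    (hκ : ‖κ‖ = 1) : (S.pencil s).eval κ ≠ 0 := by
  have hκ0 : κ ≠ 0 := norm_ne_zero_iff.1 (by rw [hκ]; exact one_ne_zero)
  rw [pencil, eval_symbolPoly _ _ _ hκ0, symbol_sub_const_mul]
  refine mul_ne_zero (pow_ne_zero _ hκ0) fun h => ?_
  have hsF : s * S.F κ = 1 := by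
    rw [Setup.F, Fsym, ← mul_div_assoc, ← sub_eq_zero.1 h, div_self (S.hQ1_ne κ hκ)]
  by_cases hk : ∃ k, κ = S.kap k
  · obtain ⟨k, rfl⟩ := hk
    exact hsk k hsF
  · simp only [not_exists] at hk
    refine lt_irrefl (1 : ℝ) ?_
    calc (1 : ℝ) = ‖s * S.F κ‖ := by rw [hsF, norm_one]
      _ ≤ ‖S.F κ‖ := by rw [norm_mul]; exact mul_le_of_le_one_left (norm_nonneg _) hs
      _ < 1 := S.hF_lt κ hκ hk

theorem isPreconnected_setOf_pencil_admissible :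
    IsPreconnected {s : ℂ | ‖s‖ ≤ 1 ∧ ∀ k, s * S.zK k ≠ 1} := by
  refine (convex_ball (0 : ℂ) 1).isPreconnected.subset_closure
    (fun s hs => ⟨(mem_ball_zero_iff.1 hs).le, fun k h => ?_⟩) fun s hs => ?_
  · have := congrArg norm h
    rw [norm_mul, show ‖S.zK k‖ = 1 from S.hF_unit k, mul_one, norm_one] at this
    exact (mem_ball_zero_iff.1 hs).ne this
  · rw [closure_ball 0 one_ne_zero, mem_closedBall_zero_iff]
    exact hs.1

theorem card_roots_pencil_filter_mem_ball {s : ℂ} (hs : ‖s‖ ≤ 1) (hsk : ∀ k, s * S.zK k ≠ 1) :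
    ((S.pencil s).roots.filter (· ∈ ball 0 1)).card = S.r := by
  have hcoeff : ∀ i, Continuous fun s => (S.pencil s).coeff i := fun i => by
    simp only [pencil, coeff_symbolPoly]
    split_ifs <;> fun_prop
  have hcont : ContinuousOn (fun s => ((S.pencil s).roots.filter (· ∈ ball 0 1)).card)
      {s : ℂ | ‖s‖ ≤ 1 ∧ ∀ k, s * S.zK k ≠ 1} := fun s hs =>
    (continuousAt_card_roots_filter_mem_ball (f := S.pencil)
      (fun s => natDegree_symbolPoly_le _ _ _) hcoeff one_pos
      fun κ hκ => S.eval_pencil_ne_zero hs.1 hs.2 (mem_sphere_zero_iff_norm.1 hκ))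
      |>.continuousWithinAt
  rw [S.isPreconnected_setOf_pencil_admissible.constant hcont (y := 0) ⟨hs, hsk⟩
    ⟨by simp, fun k => by simp⟩]
  simpa [pencil] using card_roots_symbolPoly_filter_mem_ball S.r S.p S.a1 S.hQ1_ne S.hQ1_index

end Setup

/-- Lemma 1 (spectral splitting), first part: for `z ∈ 𝒰̄ \ {z̲₁,…,z̲_K}`, the matrix `𝕄(z)` has
no eigenvalue on `𝕊¹`, exactly `r` eigenvalues in `𝔻 \ {0}` and exactly `p` eigenvalues in `𝒰`
(counted with algebraic multiplicity, i.e. as roots of the characteristic polynomial). -/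
theorem spectral_splitting (S : Setup) (z : ℂ) (hz : 1 ≤ ‖z‖)
    (hzk : ∀ k, z ≠ S.zK k) :
    (∀ κ ∈ (S.M z).charpoly.roots, ‖κ‖ ≠ 1) ∧
    ((S.M z).charpoly.roots.filter fun κ => ‖κ‖ < 1 ∧ κ ≠ 0).card = S.r ∧
    ((S.M z).charpoly.roots.filter fun κ => 1 < ‖κ‖).card = S.p := by
  obtain ⟨hAr, hAp⟩ := S.hA z hz
  have hz0 : z ≠ 0 := norm_pos_iff.1 (one_pos.trans_le hz)
  have hs : ‖z⁻¹‖ ≤ 1 := by rw [norm_inv]; exact inv_le_one_of_one_le₀ hz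
  have hsk : ∀ k, z⁻¹ * S.zK k ≠ 1 := fun k h => hzk k (inv_mul_eq_one₀ hz0 |>.1 h)
  set P := symbolPoly S.r S.p fun ℓ => Acoef S.a0 S.a1 ℓ z
  have hP : P = C z * S.pencil z⁻¹ := S.symbolPoly_Acoef_eq hz0
  have hroots : (S.M z).charpoly.roots = P.roots := by
    rw [Setup.M, charpoly_Mmat _ _ _ _ hAp, roots_C_mul _ (inv_ne_zero hAp)]
  have hroots' : P.roots = (S.pencil z⁻¹).roots := by rw [hP, roots_C_mul _ hz0]
  have hcard : Multiset.card P.roots = S.p + S.r := by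
    rw [← (IsAlgClosed.splits P).natDegree_eq_card_roots, natDegree_symbolPoly _ _ _ hAp]
  have hcirc : ∀ κ ∈ P.roots, ‖κ‖ ≠ 1 := fun κ hκ h1 => by
    rw [hroots'] at hκ
    exact S.eval_pencil_ne_zero hs hsk h1 (isRoot_of_mem_roots hκ)
  have hzero : (0 : ℂ) ∉ P.roots := fun h0 => hAr <| by
    rw [← coeff_zero_symbolPoly S.r S.p fun ℓ => Acoef S.a0 S.a1 ℓ z, coeff_zero_eq_eval_zero]
    exact isRoot_of_mem_roots h0
  have hdisk : (P.roots.filter (‖·‖ < 1)).card = S.r := by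
    simpa [hroots', mem_ball_zero_iff] using S.card_roots_pencil_filter_mem_ball hs hsk
  rw [hroots]
  refine ⟨hcirc, ?_, ?_⟩
  · rw [← hdisk, Multiset.filter_congr fun κ hκ => and_iff_left (ne_of_mem_of_not_mem hκ hzero)]
  · have := card_filter_norm_lt_one_add_card_filter_one_lt_norm _ hcirc
    omega
end
end

section
/- Under Assumptions 1–5 in the explicit specialization with K = 1 and α > 0, there exist constants η > 0, C > 0 and c > 0 such that for every integer n ≥ 1 and every j ∈ ℤ with −n p ≤ j ≤ 0, the temporal Green's function satisfies |𝒢ⁿ_j| ≤ C exp(−n η − c |j|). -/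
open scoped Classical
open Complex Filter Asymptotics Metric

noncomputable section

set_option autoImplicit false

/-! Since `Q₁ = I`, the Green's function `𝒢ⁿ` is the coefficient sequence of the Laurent
polynomial `F(κ)ⁿ = ∑ₖ 𝒢ⁿₖ κ⁻ᵏ`, so Cauchy's estimate on the circle `|κ| = ρ` gives
`|𝒢ⁿⱼ| ≤ ρʲ (sup_{|κ|=ρ} |F|)ⁿ ≤ (sup_{|κ|=ρ} |F|)ⁿ` for `j ≤ 0` and `ρ ≥ 1`.

It remains to find `ρ > 1` with `|F| < 1` on `|κ| = ρ`. The expansion of `F(e^{iξ})` gives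
`F'(1) = -α`, so `Re (conj F(κ) · κ F'(κ)) < 0` near `κ = 1`: there `|F|` strictly decreases along
outward rays, starting from `|F| ≤ 1` on the unit circle. Away from `1`, `|F| < 1` on the unit
circle already and persists on nearby circles; compactness of the circle makes both uniform.
The factor `e^{-c|j|}` is then paid for by half of the decay `e^{-nη}`, as `|j| ≤ pn`. -/

open ComplexConjugate

theorem norm_coeff_le_of_norm_sum_zpow_neg_le {S : Finset ℤ} {c : ℤ → ℂ} {ρ M : ℝ} (hρ : 0 < ρ)
    (hM : ∀ κ : ℂ, ‖κ‖ = ρ → ‖∑ k ∈ S, c k * κ ^ (-k)‖ ≤ M) {j : ℤ} (hj : j ∈ S) :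
    ‖c j‖ ≤ M * ρ ^ j := by
  have hne : ∀ κ ∈ sphere (0 : ℂ) ρ, κ ≠ 0 := fun κ hκ h => by simp [h, hρ.ne] at hκ
  have hint (a : ℂ) (m : ℤ) : CircleIntegrable (fun κ : ℂ => a * κ ^ m) 0 ρ := by
    refine ContinuousOn.circleIntegrable hρ.le (continuousOn_const.mul ?_)
    exact (continuousOn_zpow₀ m).mono hne
  have hcoeff :
      (∮ κ in C(0, ρ), κ ^ (j - 1) * ∑ k ∈ S, c k * κ ^ (-k)) = 2 * Real.pi * I * c j := by
    have hsphere : Set.EqOn (fun κ : ℂ => κ ^ (j - 1) * ∑ k ∈ S, c k * κ ^ (-k))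
        (fun κ => ∑ k ∈ S, c k * κ ^ (j - 1 - k)) (sphere 0 ρ) := by
      intro κ hκ
      simp only [Finset.mul_sum, sub_eq_add_neg (j - 1), zpow_add₀ (hne κ hκ)]
      ring_nf
    rw [circleIntegral.integral_congr hρ.le hsphere,
      circleIntegral.integral_fun_sum fun k _ => hint _ _]
    simp only [circleIntegral.integral_const_mul]
    rw [Finset.sum_eq_single_of_mem j hj]
    · have := circleIntegral.integral_sub_inv_of_mem_ball (c := 0) (w := 0) (mem_ball_self hρ)
      simp only [sub_zero] at this
      simp [this, mul_comm]
    · intro k _ hkj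
      have := circleIntegral.integral_sub_zpow_of_ne (n := j - 1 - k) (by omega) 0 0 ρ
      simp only [sub_zero] at this
      rw [this, mul_zero]
  have hbound := circleIntegral.norm_integral_le_of_norm_le_const hρ.le
    (f := fun κ : ℂ => κ ^ (j - 1) * ∑ k ∈ S, c k * κ ^ (-k)) (C := ρ ^ (j - 1) * M)
    fun κ hκ => by
      rw [mem_sphere_zero_iff_norm] at hκ
      rw [norm_mul, norm_zpow, hκ]
      exact mul_le_mul_of_nonneg_left (hM κ hκ) (by positivity)
  rw [hcoeff, norm_mul] at hbound
  have h2π : ‖(2 * Real.pi * I : ℂ)‖ = 2 * Real.pi := by simp [abs_of_pos Real.pi_pos]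
  rw [h2π] at hbound
  have hρj : 2 * Real.pi * ρ * (ρ ^ (j - 1) * M) = 2 * Real.pi * (M * ρ ^ j) := by
    rw [← add_sub_cancel 1 j, zpow_one_add₀ hρ.ne', add_sub_cancel_left]
    ring
  rw [hρj] at hbound
  exact le_of_mul_le_mul_left hbound (by positivity)

section Convolution

variable {r p : ℕ} {a : ℤ → ℂ}

theorem convAct_eq_zero_of_notMem {u : ℤ → ℂ} {lo hi : ℤ}
    (hu : ∀ k ∉ Finset.Icc lo hi, u k = 0) {j : ℤ}
    (hj : j ∉ Finset.Icc (lo - p) (hi + r)) : convAct r p a u j = 0 := by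
  refine Finset.sum_eq_zero fun ℓ hℓ => ?_
  rw [hu, mul_zero]
  simp only [Finset.mem_Icc] at hℓ hj ⊢
  omega

theorem sum_convAct_mul_zpow_neg {u : ℤ → ℂ} {lo hi : ℤ}
    (hu : ∀ k ∉ Finset.Icc lo hi, u k = 0) {κ : ℂ} (hκ : κ ≠ 0) :
    ∑ j ∈ Finset.Icc (lo - p) (hi + r), convAct r p a u j * κ ^ (-j) =
      symbol r p a κ * ∑ k ∈ Finset.Icc lo hi, u k * κ ^ (-k) := by
  have shift : ∀ ℓ ∈ Finset.Icc (-(r : ℤ)) p,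
      ∑ j ∈ Finset.Icc (lo - p) (hi + r), u (j + ℓ) * κ ^ (-j) =
        κ ^ ℓ * ∑ k ∈ Finset.Icc lo hi, u k * κ ^ (-k) := by
    intro ℓ hℓ
    rw [Finset.mem_Icc] at hℓ
    have hsub : Finset.Icc lo hi ⊆ Finset.Icc (lo - p + ℓ) (hi + r + ℓ) :=
      Finset.Icc_subset_Icc (by omega) (by omega)
    rw [Finset.sum_subset hsub fun k _ hk => by rw [hu k hk, zero_mul],
      ← Finset.map_add_right_Icc, Finset.sum_map, Finset.mul_sum]
    refine Finset.sum_congr rfl fun j _ => ?_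
    rw [addRightEmbedding_apply, neg_add, zpow_add₀ hκ]
    have : κ ^ ℓ * κ ^ (-ℓ) = 1 := by rw [← zpow_add₀ hκ, add_neg_cancel, zpow_zero]
    linear_combination (-(u (j + ℓ) * κ ^ (-j))) * this
  simp only [convAct, symbol, Finset.sum_mul]
  rw [Finset.sum_comm]
  refine Finset.sum_congr rfl fun ℓ hℓ => ?_
  simp only [mul_assoc, ← Finset.mul_sum]
  rw [shift ℓ hℓ]

/-- `𝒢ⁿ = Q₀ⁿ δ` for the explicit scheme `Q₁ = I`, computed on all sequences `ℤ → ℂ`. -/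
def green (r p : ℕ) (a : ℤ → ℂ) (n : ℕ) : ℤ → ℂ :=
  (convAct r p a)^[n] (Pi.single 0 1)

theorem green_zero : green r p a 0 = Pi.single 0 1 := rfl

theorem green_succ (n : ℕ) : green r p a (n + 1) = convAct r p a (green r p a n) :=
  Function.iterate_succ_apply' ..

theorem green_eq_zero_of_notMem {n : ℕ} {j : ℤ}
    (hj : j ∉ Finset.Icc (-(p : ℤ) * n) (r * n)) : green r p a n j = 0 := by
  induction n generalizing j with
  | zero =>
    simp only [CharP.cast_eq_zero, mul_zero, Finset.Icc_self, Finset.mem_singleton] at hj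
    simp [green_zero, hj]
  | succ n ih =>
    rw [green_succ]
    refine convAct_eq_zero_of_notMem (fun k hk => ih hk) ?_
    simpa only [Nat.cast_succ, mul_add_one, neg_mul, sub_eq_add_neg] using hj

theorem symbol_pow_eq_sum_green (n : ℕ) {κ : ℂ} (hκ : κ ≠ 0) :
    symbol r p a κ ^ n =
      ∑ k ∈ Finset.Icc (-(p : ℤ) * n) (r * n), green r p a n k * κ ^ (-k) := by
  induction n with
  | zero => simp [green_zero]
  | succ n ih =>
    rw [pow_succ', ih, ← sum_convAct_mul_zpow_neg (fun k hk => green_eq_zero_of_notMem hk) hκ]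
    simp only [green_succ, Nat.cast_succ, mul_add_one, neg_mul, sub_eq_add_neg]

theorem norm_green_le {ρ M : ℝ} (hρ : 0 < ρ)
    (hM : ∀ κ : ℂ, ‖κ‖ = ρ → ‖symbol r p a κ‖ ≤ M) {n : ℕ} {j : ℤ}
    (hj : j ∈ Finset.Icc (-(p : ℤ) * n) (r * n)) : ‖green r p a n j‖ ≤ M ^ n * ρ ^ j := by
  refine norm_coeff_le_of_norm_sum_zpow_neg_le hρ (fun κ hκ => ?_) hj
  have hκ0 : κ ≠ 0 := fun h => by simp [h, hρ.ne] at hκ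
  rw [← symbol_pow_eq_sum_green n hκ0, norm_pow]
  exact pow_le_pow_left₀ (norm_nonneg _) (hM κ hκ) n

theorem symbol_eq_one_of_eq_ite
    (ha : ∀ ℓ ∈ Finset.Icc (-(r : ℤ)) p, a ℓ = if ℓ = 0 then 1 else 0) (κ : ℂ) :
    symbol r p a κ = 1 := by
  rw [symbol, Finset.sum_congr rfl fun ℓ hℓ => by rw [ha ℓ hℓ, ite_mul, one_mul, zero_mul],
    Finset.sum_ite_eq', if_pos (by simp), zpow_zero]

theorem convAct_eq_self_of_eq_ite
    (ha : ∀ ℓ ∈ Finset.Icc (-(r : ℤ)) p, a ℓ = if ℓ = 0 then 1 else 0) (u : ℤ → ℂ) (j : ℤ) :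
    convAct r p a u j = u j := by
  rw [convAct, Finset.sum_congr rfl fun ℓ hℓ => by rw [ha ℓ hℓ, ite_mul, one_mul, zero_mul],
    Finset.sum_ite_eq', if_pos (by simp), add_zero]

theorem coe_pow_apply_dirac {a0 a1 : ℤ → ℂ} {L : Seq2 →L[ℂ] Seq2}
    (hL : ∀ (u : Seq2) (j : ℤ),
      convAct r p a1 (fun i => L u i) j = convAct r p a0 (fun i => u i) j)
    (ha1 : ∀ ℓ ∈ Finset.Icc (-(r : ℤ)) p, a1 ℓ = if ℓ = 0 then 1 else 0) (n : ℕ) :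
    ⇑((L ^ n) dirac) = green r p a0 n := by
  induction n with
  | zero => rfl
  | succ n ih =>
    ext j
    have h := hL ((L ^ n) dirac) j
    rw [convAct_eq_self_of_eq_ite ha1, ih] at h
    rw [green_succ, ← h, pow_succ', mul_apply_eq_comp]

end Convolution

theorem differentiableOn_symbol (r p : ℕ) (a : ℤ → ℂ) : DifferentiableOn ℂ (symbol r p a) {0}ᶜ :=
  fun κ hκ => by
    unfold symbol
    exact DifferentiableAt.differentiableWithinAt (DifferentiableAt.fun_sum fun ℓ _ =>
      (differentiableAt_zpow.mpr (Or.inl hκ)).const_mul (a ℓ))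

theorem deriv_eq_of_exp_expansion {f : ℂ → ℂ} (hf : DifferentiableAt ℂ f 1) {α β : ℂ} {μ : ℕ}
    (hμ : 1 ≤ μ) {g : ℝ → ℂ} (hg : g =O[nhds 0] fun ξ : ℝ => ξ ^ (2 * μ + 1))
    (hfg : ∀ᶠ ξ : ℝ in nhds 0, f (exp (I * ξ)) = exp (-I * α * ξ - β * (ξ : ℂ) ^ (2 * μ) + g ξ)) :
    deriv f 1 = -α := by
  have hg' : g =O[nhds 0] fun ξ : ℝ => ‖ξ - 0‖ ^ (2 * μ + 1) := by
    simpa only [sub_zero, norm_pow] using hg.norm_right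
  have hg0 : g 0 = 0 := hg'.eq_zero_of_norm_pow (by omega)
  have hgderiv : HasDerivAt g 0 0 := by simpa using (hg'.hasFDerivAt (by omega)).hasDerivAt
  have hξ : HasDerivAt (fun ξ : ℝ => (ξ : ℂ)) 1 0 := (hasDerivAt_id (0 : ℝ)).ofReal_comp
  have hW : HasDerivAt (fun ξ : ℝ => -I * α * ξ - β * (ξ : ℂ) ^ (2 * μ) + g ξ) (-I * α) 0 := by
    have hpow := (hξ.fun_pow (2 * μ)).const_mul β
    have hlin := hξ.const_mul (-I * α)
    refine ((hlin.fun_sub hpow).fun_add hgderiv).congr_deriv ?_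
    simp [zero_pow (show 2 * μ - 1 ≠ 0 by omega)]
  have hcurve : HasDerivAt (fun ξ : ℝ => exp (I * ξ)) I 0 := by
    simpa using (hξ.const_mul I).cexp
  have hΦ : HasDerivAt (fun ξ : ℝ => f (exp (I * ξ))) (deriv f 1 * I) 0 := by
    refine HasDerivAt.comp (h₂ := f) 0 ?_ hcurve
    simpa using hf.hasDerivAt
  have hexpW := hW.cexp
  simp only [Complex.ofReal_zero, mul_zero, zero_pow (show 2 * μ ≠ 0 by omega), sub_zero,
    hg0, add_zero, Complex.exp_zero, one_mul] at hexpW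
  have := hΦ.unique (hexpW.congr_of_eventuallyEq hfg)
  linear_combination (-I) * this + (deriv f 1 + α) * I_sq

-- `(conj (f z) * (z * f' z)).re` is half the derivative of `‖f (e^τ z)‖²` in `τ` at `τ = 0`.
theorem norm_apply_ofReal_mul_lt {f : ℂ → ℂ} {U : Set ℂ} (hUo : IsOpen U) (hUc : Convex ℝ U)
    (hf : DifferentiableOn ℂ f U) (hneg : ∀ z ∈ U, (conj (f z) * (z * deriv f z)).re < 0)
    {z : ℂ} (hz : z ∈ U) {t : ℝ} (ht : 1 < t) (htz : (t : ℂ) * z ∈ U) :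
    ‖f (t * z)‖ < ‖f z‖ := by
  have hseg : ∀ s ∈ Set.Icc (1 : ℝ) t, (s : ℂ) * z ∈ U := by
    intro s hs
    obtain ⟨θ, hθ0, hθ1, rfl⟩ : ∃ θ : ℝ, 0 ≤ θ ∧ θ ≤ 1 ∧ 1 + θ * (t - 1) = s :=
      ⟨(s - 1) / (t - 1), div_nonneg (by linarith [hs.1]) (by linarith),
        (div_le_one (by linarith)).mpr (by linarith [hs.2]),
        by field_simp [sub_ne_zero.mpr ht.ne']; ring⟩
    convert hUc hz htz (by linarith : 0 ≤ 1 - θ) hθ0 (by ring) using 1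
    simp only [Complex.real_smul]
    push_cast
    ring
  have hderiv : ∀ s ∈ Set.Icc (1 : ℝ) t,
      HasDerivAt (fun s : ℝ => ‖f (s * z)‖ ^ 2)
        (2 * (deriv f (s * z) * z * conj (f (s * z))).re) s := by
    intro s hs
    have hfs := (hf.differentiableAt (hUo.mem_nhds (hseg s hs))).hasDerivAt
    have hline : HasDerivAt (fun s : ℝ => (s : ℂ) * z) z s := by
      simpa using (hasDerivAt_id s).ofReal_comp.mul_const z
    simpa only [Complex.inner, Function.comp_def] using (hfs.comp s hline).norm_sq
  have hanti : StrictAntiOn (fun s : ℝ => ‖f (s * z)‖ ^ 2) (Set.Icc 1 t) := by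
    refine strictAntiOn_of_deriv_neg (convex_Icc 1 t)
      (fun s hs => (hderiv s hs).continuousAt.continuousWithinAt) fun s hs => ?_
    rw [interior_Icc] at hs
    have hs1 : (0 : ℝ) < s := by linarith [hs.1]
    rw [(hderiv s (Set.Ioo_subset_Icc_self hs)).deriv]
    have := hneg _ (hseg s (Set.Ioo_subset_Icc_self hs))
    have hre : (conj (f (s * z)) * ((s : ℂ) * z * deriv f (s * z))).re =
        s * (deriv f (s * z) * z * conj (f (s * z))).re := by
      rw [← Complex.re_ofReal_mul]; ring_nf
    nlinarith
  have := hanti (Set.left_mem_Icc.mpr ht.le) (Set.right_mem_Icc.mpr ht.le) ht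
  simp only [Complex.ofReal_one, one_mul] at this
  exact lt_of_pow_lt_pow_left₀ 2 (norm_nonneg _) this

theorem ContinuousOn.eventually_norm_apply_ofReal_mul_lt {f : ℂ → ℂ} {U : Set ℂ}
    (hU : IsOpen U) (hf : ContinuousOn f U) {κ₀ : ℂ} (hκ₀ : κ₀ ∈ U) {M : ℝ} (hM : ‖f κ₀‖ < M) :
    ∀ᶠ q : ℝ × ℂ in nhds (1, κ₀), (q.1 : ℂ) * q.2 ∈ U ∧ ‖f (q.1 * q.2)‖ < M := by
  have hU₀ : U ∈ nhds κ₀ := hU.mem_nhds hκ₀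
  have hmul : Tendsto (fun q : ℝ × ℂ => (q.1 : ℂ) * q.2) (nhds (1, κ₀)) (nhds κ₀) := by
    simpa using (show Continuous fun q : ℝ × ℂ => (q.1 : ℂ) * q.2 by fun_prop).tendsto (1, κ₀)
  exact (hmul.eventually hU₀).and
    (hmul.eventually ((hf.continuousAt hU₀).norm.eventually_lt continuousAt_const hM))

theorem eventually_norm_apply_ofReal_mul_lt_one_of_deriv_re_neg {f : ℂ → ℂ} {U : Set ℂ}
    (hU : IsOpen U) (h1U : 1 ∈ U) (hf : DifferentiableOn ℂ f U) (h1 : f 1 = 1)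
    (hderiv : (deriv f 1).re < 0) (hle : ∀ κ : ℂ, ‖κ‖ = 1 → ‖f κ‖ ≤ 1) :
    ∀ᶠ q : ℝ × ℂ in nhds (1, 1),
      ‖q.2‖ = 1 → 1 < q.1 → (q.1 : ℂ) * q.2 ∈ U ∧ ‖f (q.1 * q.2)‖ < 1 := by
  have hU1 : U ∈ nhds (1 : ℂ) := hU.mem_nhds h1U
  have hcont : ContinuousAt (fun z => (conj (f z) * (z * deriv f z)).re) 1 := by
    have hfc := hf.continuousOn.continuousAt hU1
    have hdc := ((hf.contDiffOn hU (n := 1)).continuousOn_deriv_of_isOpen hU le_rfl).continuousAt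
      hU1
    fun_prop
  obtain ⟨ε, hε, hball⟩ :
      ∃ ε > 0, ball (1 : ℂ) ε ⊆ U ∩ {z | (conj (f z) * (z * deriv f z)).re < 0} :=
    Metric.mem_nhds_iff.mp (Filter.inter_mem hU1
      (hcont.eventually_lt continuousAt_const (by simpa [h1] using hderiv)))
  filter_upwards [prod_mem_nhds (ball_mem_nhds (1 : ℝ) (half_pos hε))
    (ball_mem_nhds (1 : ℂ) (half_pos hε))] with ⟨t, κ⟩ ⟨ht, hκ⟩ hκ1 ht1
  simp only [mem_ball, Real.dist_eq, abs_of_pos (sub_pos.mpr ht1)] at ht hκ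
  have htκ : (t : ℂ) * κ ∈ ball (1 : ℂ) ε := by
    rw [mem_ball, dist_eq_norm,
      show (t : ℂ) * κ - 1 = ((t - 1 : ℝ) : ℂ) * κ + (κ - 1) by push_cast; ring]
    calc _ ≤ ‖((t - 1 : ℝ) : ℂ) * κ‖ + ‖κ - 1‖ := norm_add_le _ _
      _ < ε / 2 + ε / 2 := by
        rw [norm_mul, hκ1, mul_one, Complex.norm_real, Real.norm_of_nonneg (by linarith),
          ← dist_eq_norm]
        exact add_lt_add ht hκ
      _ = ε := add_halves ε
  refine ⟨(hball htκ).1, ?_⟩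
  calc ‖f (t * κ)‖ < ‖f κ‖ :=
        norm_apply_ofReal_mul_lt isOpen_ball (convex_ball 1 ε)
          (hf.mono fun z hz => (hball hz).1) (fun z hz => (hball hz).2)
          (ball_subset_ball (half_le_self hε.le) hκ) ht1 htκ
    _ ≤ 1 := hle κ hκ1

theorem exists_radius_gt_one_norm_lt_one {f : ℂ → ℂ} {U : Set ℂ} (hU : IsOpen U)
    (hsU : sphere (0 : ℂ) 1 ⊆ U) (hf : DifferentiableOn ℂ f U) (h1 : f 1 = 1)
    (hderiv : (deriv f 1).re < 0) (hlt : ∀ κ : ℂ, ‖κ‖ = 1 → κ ≠ 1 → ‖f κ‖ < 1) :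
    ∃ ρ > 1, ∀ κ : ℂ, ‖κ‖ = ρ → κ ∈ U ∧ ‖f κ‖ < 1 := by
  have hle (κ : ℂ) (hκ : ‖κ‖ = 1) : ‖f κ‖ ≤ 1 := by
    rcases eq_or_ne κ 1 with rfl | hκ1
    · rw [h1, norm_one]
    · exact (hlt κ hκ hκ1).le
  have hevent : ∀ᶠ t : ℝ in nhds 1, ∀ κ ∈ sphere (0 : ℂ) 1,
      ‖κ‖ = 1 → 1 < t → (t : ℂ) * κ ∈ U ∧ ‖f (t * κ)‖ < 1 := by
    refine (isCompact_sphere 0 1).eventually_forall_of_forall_eventually fun κ₀ hκ₀ => ?_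
    rcases eq_or_ne κ₀ 1 with rfl | hκ₀1
    · exact eventually_norm_apply_ofReal_mul_lt_one_of_deriv_re_neg hU (hsU hκ₀) hf h1 hderiv hle
    · filter_upwards [hf.continuousOn.eventually_norm_apply_ofReal_mul_lt hU (hsU hκ₀)
        (hlt κ₀ (mem_sphere_zero_iff_norm.mp hκ₀) hκ₀1)] with q hq _ _ using hq
  obtain ⟨ρ, hρU, hρ1 : 1 < ρ⟩ :=
    ((hevent.filter_mono nhdsWithin_le_nhds).and
      (eventually_mem_nhdsWithin (s := Set.Ioi 1))).exists
  refine ⟨ρ, hρ1, fun κ hκ => ?_⟩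
  have hρ0 : 0 < ρ := zero_lt_one.trans hρ1
  have hunit : ‖κ / ρ‖ = 1 := by
    rw [norm_div, hκ, Complex.norm_real, Real.norm_of_nonneg hρ0.le, div_self hρ0.ne']
  simpa [mul_div_cancel₀ κ (Complex.ofReal_ne_zero.mpr hρ0.ne')] using
    hρU (κ / ρ) (mem_sphere_zero_iff_norm.mpr hunit) hunit hρ1

theorem exists_radius_gt_one_norm_le_exp_neg {f : ℂ → ℂ} {U : Set ℂ} (hU : IsOpen U)
    (hsU : sphere (0 : ℂ) 1 ⊆ U) (hf : DifferentiableOn ℂ f U) (h1 : f 1 = 1)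
    (hderiv : (deriv f 1).re < 0) (hlt : ∀ κ : ℂ, ‖κ‖ = 1 → κ ≠ 1 → ‖f κ‖ < 1) :
    ∃ ρ > 1, ∃ K > 0, ∀ κ : ℂ, ‖κ‖ = ρ → ‖f κ‖ ≤ Real.exp (-K) := by
  obtain ⟨ρ, hρ1, hρ⟩ := exists_radius_gt_one_norm_lt_one hU hsU hf h1 hderiv hlt
  have hρ0 : 0 ≤ ρ := by linarith
  obtain ⟨κmax, hκmax, hmax⟩ := (isCompact_sphere (0 : ℂ) ρ).exists_isMaxOn
    (NormedSpace.sphere_nonempty.mpr hρ0)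
    (hf.continuousOn.mono fun κ hκ => (hρ κ (mem_sphere_zero_iff_norm.mp hκ)).1).norm
  set M := max ‖f κmax‖ (1 / 2)
  have hM0 : 0 < M := lt_max_of_lt_right one_half_pos
  refine ⟨ρ, hρ1, -Real.log M, neg_pos.mpr (Real.log_neg hM0 (max_lt ?_ one_half_lt_one)),
    fun κ hκ => ?_⟩
  · exact (hρ κmax (mem_sphere_zero_iff_norm.mp hκmax)).2
  · rw [neg_neg, Real.exp_log hM0]
    exact (hmax (mem_sphere_zero_iff_norm.mpr hκ)).trans (le_max_left _ _)

theorem exp_neg_pow_le_exp_neg_half_sub {K q x : ℝ} (hK : 0 < K) (hq : 0 < q) {n : ℕ}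
    (hx : |x| ≤ q * n) : Real.exp (-K) ^ n ≤ Real.exp (-(n : ℝ) * (K / 2) - K / (2 * q) * |x|) := by
  rw [← Real.exp_nat_mul]
  gcongr
  have hc : K / (2 * q) * |x| ≤ K / (2 * q) * (q * n) := by gcongr
  have hcn : K / (2 * q) * (q * n) = n * (K / 2) := by field_simp
  linarith

theorem temporal_green_left_bound_general
    (r p : ℕ) (a0 a1 : ℤ → ℂ)
    (α β : ℝ) (μ : ℕ) (hα : 0 < α) (hμ : 1 ≤ μ)
    (L : Seq2 →L[ℂ] Seq2)
    -- `ℒ = Q₁⁻¹ Q₀` is characterized by `Q₁ ∘ ℒ = Q₀`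
    (hL : ∀ (u : Seq2) (j : ℤ),
      convAct r p a1 (fun i => L u i) j = convAct r p a0 (fun i => u i) j)
    -- explicit case: `Q₁ = I`
    (hQ1id : ∀ ℓ ∈ Finset.Icc (-(r : ℤ)) (p : ℤ), a1 ℓ = if ℓ = 0 then 1 else 0)
    -- Assumption 2 specialized to `K = 1`, `κ̲₁ = 1`, `z̲₁ = F(1) = 1`
    (hF1 : Fsym r p a0 a1 1 = 1)
    (hFlt : ∀ κ : ℂ, ‖κ‖ = 1 → κ ≠ 1 → ‖Fsym r p a0 a1 κ‖ < 1)
    (hexp : ∃ g : ℝ → ℂ, (g =O[nhds 0] fun ξ : ℝ => ξ ^ (2 * μ + 1)) ∧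
      ∀ᶠ ξ : ℝ in nhds 0, Fsym r p a0 a1 (Complex.exp (Complex.I * ξ)) =
        Complex.exp (-(Complex.I) * (α : ℂ) * (ξ : ℂ)
          - (β : ℂ) * (ξ : ℂ) ^ (2 * μ) + g ξ))
    : ∃ η > (0 : ℝ), ∃ C > (0 : ℝ), ∃ c > (0 : ℝ), ∀ n : ℕ, 1 ≤ n → ∀ j : ℤ,
      -(p : ℤ) * n ≤ j → j ≤ 0 →
      ‖((L ^ n) dirac) j‖ ≤ C * Real.exp (-(n : ℝ) * η - c * |(j : ℝ)|) := by
  have hF : Fsym r p a0 a1 = symbol r p a0 := funext fun κ => by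
    rw [Fsym, symbol_eq_one_of_eq_ite hQ1id, div_one]
  rw [hF] at hF1 hFlt hexp
  obtain ⟨g, hg, hfg⟩ := hexp
  have hdiff := differentiableOn_symbol r p a0
  have hderiv : deriv (symbol r p a0) 1 = -α := deriv_eq_of_exp_expansion
    (hdiff.differentiableAt (isOpen_compl_singleton.mem_nhds one_ne_zero)) hμ hg hfg
  obtain ⟨ρ, hρ, K, hK, hbound⟩ := exists_radius_gt_one_norm_le_exp_neg isOpen_compl_singleton
    (fun κ hκ => ne_zero_of_mem_unit_sphere ⟨κ, hκ⟩) hdiff hF1 (by simpa [hderiv]) hFlt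
  refine ⟨K / 2, half_pos hK, 1, one_pos, K / (2 * (p + 1)), by positivity, fun n _ j hjl hj0 => ?_⟩
  have hj : j ∈ Finset.Icc (-(p : ℤ) * n) (r * n) :=
    Finset.mem_Icc.mpr ⟨hjl, hj0.trans (by positivity)⟩
  have habs : |(j : ℝ)| ≤ (p + 1) * n := by
    rw [abs_of_nonpos (by exact_mod_cast hj0)]
    have : -(p : ℝ) * n ≤ j := by exact_mod_cast hjl
    nlinarith
  rw [coe_pow_apply_dirac hL hQ1id, one_mul]
  calc ‖green r p a0 n j‖ ≤ Real.exp (-K) ^ n * ρ ^ j := norm_green_le (by linarith) hbound hj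
    _ ≤ Real.exp (-K) ^ n :=
      mul_le_of_le_one_right (by positivity) (zpow_le_one_of_nonpos₀ hρ.le hj0)
    _ ≤ _ := exp_neg_pow_le_exp_neg_half_sub hK (by positivity) habs

/-- Lemma 7: in the explicit case with `K = 1` and `α > 0`, the temporal Green's function
`𝒢ⁿ = ℒⁿ δ` satisfies `|𝒢ⁿ_j| ≤ C e^{-nη - c|j|}` for `-np ≤ j ≤ 0`. -/
theorem temporal_green_left_bound
    (r p : ℕ) (hrp : 1 ≤ p + r) (a0 a1 : ℤ → ℂ)
    (α β : ℝ) (μ : ℕ) (hα : 0 < α) (hβ : 0 < β) (hμ : 1 ≤ μ)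
    (L : Seq2 →L[ℂ] Seq2)
    -- Assumption 1
    (hQ1_ne : ∀ κ : ℂ, ‖κ‖ = 1 → symbol r p a1 κ ≠ 0)
    (hQ1_index : (2 * (Real.pi : ℂ) * Complex.I)⁻¹ *
      (∮ κ in C(0, 1), deriv (symbol r p a1) κ / symbol r p a1 κ) = 0)
    -- `ℒ = Q₁⁻¹ Q₀` is characterized by `Q₁ ∘ ℒ = Q₀`
    (hL : ∀ (u : Seq2) (j : ℤ),
      convAct r p a1 (fun i => L u i) j = convAct r p a0 (fun i => u i) j)
    -- explicit case: `Q₁ = I`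
    (hQ1id : ∀ ℓ ∈ Finset.Icc (-(r : ℤ)) (p : ℤ), a1 ℓ = if ℓ = 0 then 1 else 0)
    -- Assumption 2 specialized to `K = 1`, `κ̲₁ = 1`, `z̲₁ = F(1) = 1`
    (hF1 : Fsym r p a0 a1 1 = 1)
    (hFlt : ∀ κ : ℂ, ‖κ‖ = 1 → κ ≠ 1 → ‖Fsym r p a0 a1 κ‖ < 1)
    (hexp : ∃ g : ℝ → ℂ, (g =O[nhds 0] fun ξ : ℝ => ξ ^ (2 * μ + 1)) ∧
      ∀ᶠ ξ : ℝ in nhds 0, Fsym r p a0 a1 (Complex.exp (Complex.I * ξ)) =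
        Complex.exp (-(Complex.I) * (α : ℂ) * (ξ : ℂ)
          - (β : ℂ) * (ξ : ℂ) ^ (2 * μ) + g ξ))
    -- Assumption 3
    (hA : ∀ z : ℂ, 1 ≤ ‖z‖ → Acoef a0 a1 (-(r : ℤ)) z ≠ 0 ∧ Acoef a0 a1 (p : ℤ) z ≠ 0)
    : ∃ η > (0 : ℝ), ∃ C > (0 : ℝ), ∃ c > (0 : ℝ), ∀ n : ℕ, 1 ≤ n → ∀ j : ℤ,
      -(p : ℤ) * n ≤ j → j ≤ 0 →
      ‖((L ^ n) dirac) j‖ ≤ C * Real.exp (-(n : ℝ) * η - c * |(j : ℝ)|) :=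
  temporal_green_left_bound_general r p a0 a1 α β μ hα hμ L hL hQ1id hF1 hFlt hexp
end
end
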